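/- arXiv:2001.10274 — 2 statements merged into one kernel-verified Lean document; each statement's English description precedes it below -/
import Mathlib

section
/- Every discrete parameterised monad gives rise to a category-graded monad indexed by the indiscrete category on the same objects: given P with operations η^P_I : Id ⟶ P(I,I) and μ^P_{I,J,K} : P(I,J) ∘ P(J,K) ⟶ P(I,K) satisfying the parameterised monad laws, defining T on the morphism (I,J) of the indiscrete category by T_{(I,J)} = P(I,J), with unit η_I = η^P_I and multiplication μ_{(I,J),(J,K)} = μ^P_{I,J,K}, satisfies the category-graded monad (lax functor) unit and associativity axioms. -/
open CategoryTheory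

universe w v u v' u'

/-- A category-graded monad on `C` indexed by a category `I`: a lax functor
from `Iᵒᵖ` to the one-object 2-category of endofunctors on `C`.  It assigns
to every morphism `f : X ⟶ Y` of `I` an endofunctor `T f` of `C`, with unit
`η X : Id ⟶ T (𝟙 X)` and multiplication `μ f g : T f ∘ T g ⟶ T (g ∘ f)`
(here `T g ⋙ T f` is the functor `A ↦ T f (T g A)` and `f ≫ g` is `g ∘ f`),
satisfying the lax-functor unitality and associativity axioms. -/
structure CatGradedMonad (I : Type u) [Category.{v} I] (C : Type u') [Category.{v'} C] where
  T : ∀ {X Y : I}, (X ⟶ Y) → C ⥤ C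
  η : ∀ X : I, 𝟭 C ⟶ T (𝟙 X)
  μ : ∀ {X Y Z : I} (f : X ⟶ Y) (g : Y ⟶ Z), T g ⋙ T f ⟶ T (f ≫ g)
  left_unit : ∀ {X Y : I} (f : X ⟶ Y) (A : C),
    (T f).map ((η Y).app A) ≫ (μ f (𝟙 Y)).app A = eqToHom (by simp)
  right_unit : ∀ {X Y : I} (f : X ⟶ Y) (A : C),
    (η X).app ((T f).obj A) ≫ (μ (𝟙 X) f).app A = eqToHom (by simp)
  assoc : ∀ {X Y Z W : I} (f : X ⟶ Y) (g : Y ⟶ Z) (h : Z ⟶ W) (A : C),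
    (μ f g).app ((T h).obj A) ≫ (μ (f ≫ g) h).app A =
      (T f).map ((μ g h).app A) ≫ (μ f (g ≫ h)).app A ≫ eqToHom (by simp)

/-- A discrete parameterised monad: a family of endofunctors `P i j` indexed
by pairs of objects of a discrete category (so there is no morphism action),
with unit `η i : Id ⟶ P i i` and multiplication
`μ i j k : P(i,j) ∘ P(j,k) ⟶ P(i,k)` satisfying the parameterised monad unit
and associativity laws (the dinaturality squares collapse to identities). -/
structure DiscParamMonad (I : Type w) (C : Type u') [Category.{v'} C] where
  P : I → I → C ⥤ C
  η : ∀ i, 𝟭 C ⟶ P i i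
  μ : ∀ i j k, P j k ⋙ P i j ⟶ P i k
  left_unit : ∀ (i j : I) (A : C),
    (P i j).map ((η j).app A) ≫ (μ i j j).app A = 𝟙 ((P i j).obj A)
  right_unit : ∀ (i j : I) (A : C),
    (η i).app ((P i j).obj A) ≫ (μ i i j).app A = 𝟙 ((P i j).obj A)
  assoc : ∀ (i j k l : I) (A : C),
    (μ i j k).app ((P k l).obj A) ≫ (μ i k l).app A =
      (P i j).map ((μ j k l).app A) ≫ (μ i j l).app A

/-- The indiscrete category on a type `I`: exactly one morphism between any
two objects. -/
def Indisc (I : Type w) := I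

instance (I : Type w) : Category (Indisc I) where
  Hom _ _ := PUnit
  id _ := PUnit.unit
  comp _ _ := PUnit.unit

/-- Every discrete parameterised monad gives rise to a category-graded monad
indexed by the indiscrete category on the same objects: setting
`T (I,J) = P(I,J)` on the unique morphism `(I,J)`, with unit `η_I = η^P_I`
and multiplication `μ_{(I,J),(J,K)} = μ^P_{I,J,K}`, satisfies the
category-graded monad (lax functor) unit and associativity axioms. -/
theorem discParamMonad_is_catGradedMonad (I : Type w) (C : Type u')
    [Category.{v'} C] (Pm : DiscParamMonad I C) :
    ∃ M : CatGradedMonad (Indisc I) C,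
      (∀ (X Y : Indisc I) (f : X ⟶ Y), M.T f = Pm.P X Y)
      ∧ (∀ (X : Indisc I) (A : C), HEq ((M.η X).app A) ((Pm.η X).app A))
      ∧ (∀ (X Y Z : Indisc I) (f : X ⟶ Y) (g : Y ⟶ Z) (A : C),
          HEq ((M.μ f g).app A) ((Pm.μ X Y Z).app A)) := by
  refine ⟨{ T := fun {X Y} _ => Pm.P X Y
            η := fun X => Pm.η X
            μ := fun {X Y Z} _ _ => Pm.μ X Y Z
            left_unit := ?_
            right_unit := ?_
            assoc := ?_ }, fun _ _ _ => rfl, fun _ _ => HEq.rfl, fun _ _ _ _ _ _ => HEq.rfl⟩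
  · intro X Y f A
    simpa using Pm.left_unit X Y A
  · intro X Y f A
    simpa using Pm.right_unit X Y A
  · intro X Y Z W f g h A
    simpa using Pm.assoc X Y Z W A
end

section
/- Every parameterised monad P over ℂ indexed by 𝕀 yields a category-graded monad over ℂ indexed by the pair completion 𝕀^∇, together with a generalised unit on the subcategory 𝕀: define T(f : I → J) = P(I,J), η_I = η^P_I, μ_{f,g} = μ^P_{I,J,K}, and η̄_f = P(id_I, f) ∘ η^P_I for f : I → J in 𝕀; then the category-graded monad axioms and the generalised unit axioms hold, and moreover P(id_I, f) ∘ η^P_I = P(f, id_J) ∘ η^P_J (the two candidate definitions of η̄ coincide) by dinaturality of η^P. -/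
open CategoryTheory

universe v u v' u'

/-- A generalised unit for a category-graded monad `M`, relative to a wide
subcategory `𝕊 ⊆ 𝕀` (given by a predicate `S` on morphisms containing all
identities and closed under composition): a family of natural transformations
`η̄ f : Id ⟶ T f` for `f ∈ 𝕊` such that generating two computations via `η̄`
and multiplying agrees with generating the composite, and `η̄` agrees with the
unit `η` on identities. -/
structure GenUnit {I : Type u} [Category.{v} I] {C : Type u'} [Category.{v'} C]
    (M : CatGradedMonad I C) where
  S : ∀ {X Y : I}, (X ⟶ Y) → Prop
  S_id : ∀ X : I, S (𝟙 X)
  S_comp : ∀ {X Y Z : I} {f : X ⟶ Y} {g : Y ⟶ Z}, S f → S g → S (f ≫ g)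
  ηbar : ∀ {X Y : I} (f : X ⟶ Y), S f → (𝟭 C ⟶ M.T f)
  ηbar_id : ∀ X : I, ηbar (𝟙 X) (S_id X) = M.η X
  ηbar_comp : ∀ {X Y Z : I} (f : X ⟶ Y) (g : Y ⟶ Z) (hf : S f) (hg : S g) (A : C),
    (ηbar f hf).app A ≫ (M.T f).map ((ηbar g hg).app A) ≫ (M.μ f g).app A =
      (ηbar (f ≫ g) (S_comp hf hg)).app A

/-- A (full) parameterised monad on `C` indexed by a category `I`
(Atkey): a functor `P : Iᵒᵖ × I → [C,C]` — given here by an object family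
`P X Y` and a bifunctorial morphism action `act f g : P X Y ⟶ P X' Y'` for
`f : X' ⟶ X`, `g : Y ⟶ Y'` — with unit `η X : Id ⟶ P X X` and multiplication
`μ X Y Z : P(X,Y) ∘ P(Y,Z) ⟶ P(X,Z)` satisfying unit and associativity laws,
dinaturality of `η` in `X`, and dinaturality of `μ` in the middle index. -/
structure ParamMonad (I : Type u) [Category.{v} I] (C : Type u') [Category.{v'} C] where
  P : I → I → C ⥤ C
  act : ∀ {X X' Y Y' : I}, (X' ⟶ X) → (Y ⟶ Y') → (P X Y ⟶ P X' Y')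
  act_id : ∀ X Y : I, act (𝟙 X) (𝟙 Y) = 𝟙 (P X Y)
  act_comp : ∀ {X X' X'' Y Y' Y'' : I} (f : X' ⟶ X) (f' : X'' ⟶ X')
      (g : Y ⟶ Y') (g' : Y' ⟶ Y''),
      act f g ≫ act f' g' = act (f' ≫ f) (g ≫ g')
  η : ∀ X : I, 𝟭 C ⟶ P X X
  μ : ∀ X Y Z : I, P Y Z ⋙ P X Y ⟶ P X Z
  left_unit : ∀ (X Y : I) (A : C),
    (P X Y).map ((η Y).app A) ≫ (μ X Y Y).app A = 𝟙 ((P X Y).obj A)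
  right_unit : ∀ (X Y : I) (A : C),
    (η X).app ((P X Y).obj A) ≫ (μ X X Y).app A = 𝟙 ((P X Y).obj A)
  assoc : ∀ (X Y Z W : I) (A : C),
    (μ X Y Z).app ((P Z W).obj A) ≫ (μ X Z W).app A =
      (P X Y).map ((μ Y Z W).app A) ≫ (μ X Y W).app A
  η_dinat : ∀ {X Y : I} (f : X ⟶ Y),
    η X ≫ act (𝟙 X) f = η Y ≫ act f (𝟙 Y)
  μ_dinat : ∀ {X Y Y' Z : I} (g : Y ⟶ Y') (A : C),
    (act (𝟙 X) g).app ((P Y' Z).obj A) ≫ (μ X Y' Z).app A =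
      (P X Y).map ((act g (𝟙 Z)).app A) ≫ (μ X Y Z).app A

/-- The pair completion `𝕀^∇` of a category `𝕀`: same objects, hom-sets
`𝕀^∇(I,J) = 𝕀(I,J) ⊎ {(I,J)}`. -/
structure PairCat (I : Type u) where
  obj : I

instance PairCat.category (I : Type u) [Category.{v} I] :
    Category (PairCat I) where
  Hom X Y := (X.obj ⟶ Y.obj) ⊕ PUnit.{v + 1}
  id X := Sum.inl (𝟙 X.obj)
  comp f g :=
    match f, g with
    | Sum.inl f', Sum.inl g' => Sum.inl (f' ≫ g')
    | _, _ => Sum.inr PUnit.unit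
  id_comp f := by cases f <;> simp
  comp_id f := by cases f <;> simp
  assoc f g h := by cases f <;> cases g <;> cases h <;> simp

lemma ParamMonad.key {I : Type u} [Category.{v} I] {C : Type u'} [Category.{v'} C]
    (Pm : ParamMonad I C) {X Y Z : I} (f' : X ⟶ Y) (g' : Y ⟶ Z) (A : C) :
    (Pm.η X ≫ Pm.act (𝟙 X) f').app A ≫
      (Pm.P X Y).map ((Pm.η Y ≫ Pm.act (𝟙 Y) g').app A) ≫ (Pm.μ X Y Z).app A =
    (Pm.η X ≫ Pm.act (𝟙 X) (f' ≫ g')).app A := by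
  rw [Pm.η_dinat g']
  simp only [NatTrans.comp_app, Functor.id_obj, Functor.map_comp, Category.assoc]
  rw [← Pm.μ_dinat g' A, ← Category.assoc ((Pm.P X Y).map ((Pm.η Z).app A)),
    (Pm.act (𝟙 X) g').naturality ((Pm.η Z).app A)]
  simp only [Functor.id_map, Category.assoc]
  rw [Pm.left_unit]
  have := congrArg (fun (t : Pm.P X X ⟶ Pm.P X Z) => t.app A)
    (Pm.act_comp (𝟙 X) (𝟙 X) f' g')
  simp only [NatTrans.comp_app, Category.comp_id] at this
  simp only [Category.comp_id, Functor.id_obj]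
  rw [this]

def ParamMonad.toCat {I : Type u} [Category.{v} I] {C : Type u'} [Category.{v'} C]
    (Pm : ParamMonad I C) : CatGradedMonad (PairCat I) C where
  T {X Y} _ := Pm.P X.obj Y.obj
  η X := Pm.η X.obj
  μ {X Y Z} _ _ := Pm.μ X.obj Y.obj Z.obj
  left_unit f A := by simpa using Pm.left_unit _ _ A
  right_unit f A := by simpa using Pm.right_unit _ _ A
  assoc f g h A := by simpa using Pm.assoc _ _ _ _ A

def ParamMonad.toUnit {I : Type u} [Category.{v} I] {C : Type u'} [Category.{v'} C]
    (Pm : ParamMonad I C) : GenUnit Pm.toCat where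
  S {X Y} f := ∃ f' : X.obj ⟶ Y.obj, f = Sum.inl f'
  S_id X := ⟨𝟙 X.obj, rfl⟩
  S_comp {X Y Z f g} hf hg := by
    obtain ⟨f', rfl⟩ := hf; obtain ⟨g', rfl⟩ := hg; exact ⟨f' ≫ g', rfl⟩
  ηbar {X Y} f hf :=
    match f, hf with
    | Sum.inl f', _ => Pm.η X.obj ≫ Pm.act (𝟙 X.obj) f'
    | Sum.inr _, hf => absurd hf.choose_spec (by simp)
  ηbar_id X := by
    show Pm.η X.obj ≫ Pm.act (𝟙 X.obj) (𝟙 X.obj) = Pm.η X.obj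
    rw [Pm.act_id, Category.comp_id]
  ηbar_comp {X Y Z} f g hf hg A := by
    obtain ⟨f', rfl⟩ := hf; obtain ⟨g', rfl⟩ := hg
    exact Pm.key f' g' A

/-- Every parameterised monad `P` over `C` indexed by `𝕀` yields a
category-graded monad over `C` indexed by the pair completion `𝕀^∇`, together
with a generalised unit on the (wide) subcategory `𝕀` (the image of the left
injection): `T (f : I ⟶ J) = P(I,J)`, `η_I = η^P_I`, `μ_{f,g} = μ^P_{I,J,K}`,
and `η̄_f = P(id_I, f) ∘ η^P_I` for `f : I ⟶ J` in `𝕀`.  Moreover the two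
candidate definitions of `η̄` coincide:
`P(id_I, f) ∘ η^P_I = P(f, id_J) ∘ η^P_J`, by dinaturality of `η^P`. -/
theorem paramMonad_is_catGradedMonad_with_genUnit
    {I : Type u} [Category.{v} I] {C : Type u'} [Category.{v'} C]
    (Pm : ParamMonad I C) :
    -- the two candidate definitions of the generalised unit coincide
    (∀ (X Y : I) (f : X ⟶ Y),
        Pm.η X ≫ Pm.act (𝟙 X) f = Pm.η Y ≫ Pm.act f (𝟙 Y))
    ∧ ∃ (M : CatGradedMonad (PairCat I) C) (U : GenUnit M),
        (∀ (X Y : PairCat I) (f : X ⟶ Y), M.T f = Pm.P X.obj Y.obj)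
        ∧ (∀ (X : PairCat I) (A : C),
            HEq ((M.η X).app A) ((Pm.η X.obj).app A))
        ∧ (∀ (X Y Z : PairCat I) (f : X ⟶ Y) (g : Y ⟶ Z) (A : C),
            HEq ((M.μ f g).app A) ((Pm.μ X.obj Y.obj Z.obj).app A))
        ∧ (∀ (X Y : PairCat I) (h : X ⟶ Y),
            U.S h ↔ ∃ f : X.obj ⟶ Y.obj, h = Sum.inl f)
        ∧ (∀ (X Y : PairCat I) (f : X.obj ⟶ Y.obj)
            (hS : U.S (X := X) (Y := Y) (Sum.inl f)) (A : C),
            HEq ((U.ηbar (X := X) (Y := Y) (Sum.inl f) hS).app A)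
              ((Pm.η X.obj ≫ Pm.act (𝟙 X.obj) f).app A)) := by
  refine ⟨fun X Y f => Pm.η_dinat f, Pm.toCat, Pm.toUnit, fun _ _ _ => rfl,
    fun _ _ => HEq.rfl, fun _ _ _ _ _ _ => HEq.rfl, fun _ _ _ => Iff.rfl,
    fun _ _ _ _ _ => HEq.rfl⟩
end
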